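/- arXiv:2106.04860 — 2 statements merged into one kernel-verified Lean document; each statement's English description precedes it below -/
import Mathlib

section
/- Fix K̄ > 0 and let f(b) := ψ(b)/ψ'(b) − φ_{K̄}(b)/φ_{K̄}'(b). For each integer n ≥ 1 let b̂(n) be the unique positive solution of f(b) = K̄/(n·r) if φ_{K̄}'(0) < −n·r/K̄ and b̂(n) := 0 otherwise, and define V_n(x) := D₁(n)·ψ(x) for 0 ≤ x ≤ b̂(n) and V_n(x) := D₄(n)·φ_{K̄}(x) + K̄/(n·r) for x ≥ b̂(n), where D₁(n) := (−(K̄/(n·r))·φ_{K̄}'(b̂(n))) / (φ_{K̄}(b̂(n))ψ'(b̂(n)) − φ_{K̄}'(b̂(n))ψ(b̂(n))) and D₄(n) := (−(K̄/(n·r))·ψ'(b̂(n))) / (φ_{K̄}(b̂(n))ψ'(b̂(n)) − φ_{K̄}'(b̂(n))ψ(b̂(n))). Then the total equilibrium value is nonincreasing in n: for all integers 1 ≤ m ≤ n and all x ≥ 0, m·V_m(x) ≥ n·V_n(x). -/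
/-!
Let `W = φψ' − φ'ψ > 0` be the Wronskian of `φ = φ_K̄` and `ψ`, and put `p = −φ'/W`,
`q = ψ'/W`, so that `ψ p + φ q = 1`. Up to the factor `K̄/r`, the total value `n V_n(x)` is
`ψ(x) p(b̂ n)` for `x ≤ b̂ n` and `1 − φ(x) q(b̂ n)` beyond. Subtracting the two ODEs gives
`½σ² (ψ'φ'' − ψ''φ') = r W + K̄ ψ'φ'`, which is `≤ 0` wherever `f ≤ K̄/r`; there
`p' = −φ (ψ'φ'' − ψ''φ')/W² ≥ 0` and `q' = ψ (ψ'φ'' − ψ''φ')/W² ≤ 0`. Since `f < K̄/(m r)` on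
`(0, b̂ m)` and `b̂ n ≤ b̂ m`, `p` increases and `q` decreases on `[0, b̂ m]`, and on each of the
three ranges `x ≤ b̂ n`, `b̂ n ≤ x ≤ b̂ m`, `b̂ m ≤ x` this gives `n V_n(x) ≤ m V_m(x)`.
-/

open Set Filter Topology

section Calculus

variable {g : ℝ → ℝ} {a x : ℝ}

theorem MonotoneOn.deriv_nonneg_of_Ici (hg : MonotoneOn g (Ici a)) (hd : DifferentiableAt ℝ g x)
    (hx : a ≤ x) : 0 ≤ deriv g x :=
  hd.derivWithin (uniqueDiffOn_Ici a x hx) ▸ hg.derivWithin_nonneg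

theorem AntitoneOn.deriv_nonpos_of_Ici (hg : AntitoneOn g (Ici a)) (hd : DifferentiableAt ℝ g x)
    (hx : a ≤ x) : deriv g x ≤ 0 :=
  hd.derivWithin (uniqueDiffOn_Ici a x hx) ▸ hg.derivWithin_nonpos

theorem HasDerivAt.nonpos_of_isMaxOn_Ici {g' : ℝ} (hd : HasDerivAt g g' x)
    (hmax : IsMaxOn g (Ici x) x) : g' ≤ 0 := by
  have hone : (1 : ℝ) ∈ posTangentConeAt (Ici x) x :=
    one_mem_posTangentConeAt_iff_frequently.2 (Eventually.frequently
      (eventually_nhdsWithin_of_forall fun _ hy => mem_Ici.2 (le_of_lt hy)))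
  simpa using hmax.localize.hasFDerivWithinAt_nonpos hd.hasFDerivAt.hasFDerivWithinAt hone

theorem ContinuousOn.lt_of_forall_ne {b k : ℝ} (hg : ContinuousOn g (Icc a b)) (ha : g a < k)
    (hne : ∀ z ∈ Ioo a b, g z ≠ k) : ∀ y ∈ Ico a b, g y < k := by
  rintro y ⟨hay, hyb⟩
  by_contra! hky
  obtain ⟨z, ⟨haz, hzy⟩, hz⟩ :=
    intermediate_value_Icc hay (hg.mono (Icc_subset_Icc_right hyb.le)) ⟨ha.le, hky⟩
  refine hne z ⟨haz.lt_of_ne ?_, hzy.trans_lt hyb⟩ hz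
  rintro rfl
  exact ha.ne hz

theorem ContDiff.continuousOn_div_deriv {s : Set ℝ} (hg : ContDiff ℝ 1 g)
    (hs : ∀ y ∈ s, deriv g y ≠ 0) : ContinuousOn (fun y => g y / deriv g y) s :=
  hg.continuous.continuousOn.div hg.continuous_deriv_one.continuousOn hs

end Calculus

section SecondOrderODE

variable {g : ℝ → ℝ} {α β r c y : ℝ}

theorem deriv_pos_of_monotoneOn_of_ode (hr : 0 < r) (hg : MonotoneOn g (Ici c))
    (hd : Differentiable ℝ g) (hy : c < y) (hgy : 0 < g y)
    (hode : α * deriv (deriv g) y + β * deriv g y - r * g y = 0) : 0 < deriv g y := by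
  have hnonneg : ∀ z, c < z → 0 ≤ deriv g z := fun z hz => hg.deriv_nonneg_of_Ici (hd z) hz.le
  refine (hnonneg y hy).lt_of_ne fun h0 => ?_
  have hmin : IsLocalMin (deriv g) y := by
    filter_upwards [Ioi_mem_nhds hy] with z hz
    exact h0 ▸ hnonneg z hz
  rw [hmin.deriv_eq_zero, ← h0] at hode
  nlinarith

theorem deriv_neg_of_antitoneOn_of_ode (hr : 0 < r) (hα : 0 < α) (hg : AntitoneOn g (Ici c))
    (hd : Differentiable ℝ g) (hd' : DifferentiableAt ℝ (deriv g) y) (hy : c ≤ y)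
    (hgy : 0 < g y) (hode : α * deriv (deriv g) y + β * deriv g y - r * g y = 0) :
    deriv g y < 0 := by
  have hnonpos : ∀ z, c ≤ z → deriv g z ≤ 0 := fun z hz => hg.deriv_nonpos_of_Ici (hd z) hz
  refine (hnonpos y hy).lt_of_ne fun h0 => ?_
  have hmax : IsMaxOn (deriv g) (Ici y) y := fun z hz => h0 ▸ hnonpos z (hy.trans hz)
  have := hd'.hasDerivAt.nonpos_of_isMaxOn_Ici hmax
  rw [h0] at hode
  nlinarith

end SecondOrderODE

noncomputable def wronskian (u v : ℝ → ℝ) (x : ℝ) : ℝ := u x * deriv v x - deriv u x * v x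

noncomputable def innerCoeff (φ ψ : ℝ → ℝ) (b : ℝ) : ℝ := -deriv φ b / wronskian φ ψ b

noncomputable def outerCoeff (φ ψ : ℝ → ℝ) (b : ℝ) : ℝ := deriv ψ b / wronskian φ ψ b

section Wronskian

variable {φ ψ : ℝ → ℝ} {s : Set ℝ} {x : ℝ}

theorem wronskian_pos (hφ : 0 < φ x) (hψ : 0 ≤ ψ x) (hφ' : deriv φ x < 0)
    (hψ' : 0 < deriv ψ x) : 0 < wronskian φ ψ x := by
  unfold wronskian
  nlinarith [mul_pos hφ hψ', mul_nonpos_of_nonpos_of_nonneg hφ'.le hψ]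

theorem mul_innerCoeff_add_mul_outerCoeff (hW : wronskian φ ψ x ≠ 0) :
    ψ x * innerCoeff φ ψ x + φ x * outerCoeff φ ψ x = 1 := by
  unfold innerCoeff outerCoeff
  rw [← div_self hW, wronskian]
  ring

theorem hasDerivAt_wronskian (hφ : ContDiff ℝ 2 φ) (hψ : ContDiff ℝ 2 ψ) :
    HasDerivAt (wronskian φ ψ) (φ x * deriv (deriv ψ) x - deriv (deriv φ) x * ψ x) x := by
  refine (((hφ.differentiable two_ne_zero x).hasDerivAt.mul
    (hψ.differentiable_deriv_two x).hasDerivAt).sub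
    ((hφ.differentiable_deriv_two x).hasDerivAt.mul
      (hψ.differentiable two_ne_zero x).hasDerivAt)).congr_deriv ?_
  ring

theorem hasDerivAt_innerCoeff (hφ : ContDiff ℝ 2 φ) (hψ : ContDiff ℝ 2 ψ)
    (hW : wronskian φ ψ x ≠ 0) :
    HasDerivAt (innerCoeff φ ψ)
      (-φ x * wronskian (deriv ψ) (deriv φ) x / wronskian φ ψ x ^ 2) x := by
  refine ((hφ.differentiable_deriv_two x).hasDerivAt.neg.div (hasDerivAt_wronskian hφ hψ)
    hW).congr_deriv ?_
  simp only [Pi.neg_apply, wronskian]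
  ring

theorem hasDerivAt_outerCoeff (hφ : ContDiff ℝ 2 φ) (hψ : ContDiff ℝ 2 ψ)
    (hW : wronskian φ ψ x ≠ 0) :
    HasDerivAt (outerCoeff φ ψ)
      (ψ x * wronskian (deriv ψ) (deriv φ) x / wronskian φ ψ x ^ 2) x := by
  refine ((hψ.differentiable_deriv_two x).hasDerivAt.div (hasDerivAt_wronskian hφ hψ)
    hW).congr_deriv ?_
  unfold wronskian
  ring

theorem monotoneOn_innerCoeff (hφ : ContDiff ℝ 2 φ) (hψ : ContDiff ℝ 2 ψ) (hs : Convex ℝ s)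
    (hW : ∀ y ∈ s, wronskian φ ψ y ≠ 0) (hφs : ∀ y ∈ interior s, 0 ≤ φ y)
    (hD : ∀ y ∈ interior s, wronskian (deriv ψ) (deriv φ) y ≤ 0) :
    MonotoneOn (innerCoeff φ ψ) s := by
  refine monotoneOn_of_deriv_nonneg hs
    (fun y hy => (hasDerivAt_innerCoeff hφ hψ (hW y hy)).continuousAt.continuousWithinAt)
    (fun y hy => (hasDerivAt_innerCoeff hφ hψ (hW y (interior_subset hy))).differentiableAt
      |>.differentiableWithinAt) fun y hy => ?_
  rw [(hasDerivAt_innerCoeff hφ hψ (hW y (interior_subset hy))).deriv, neg_mul]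
  exact div_nonneg (neg_nonneg.2 (mul_nonpos_of_nonneg_of_nonpos (hφs y hy) (hD y hy)))
    (sq_nonneg _)

theorem antitoneOn_outerCoeff (hφ : ContDiff ℝ 2 φ) (hψ : ContDiff ℝ 2 ψ) (hs : Convex ℝ s)
    (hW : ∀ y ∈ s, wronskian φ ψ y ≠ 0) (hψs : ∀ y ∈ interior s, 0 ≤ ψ y)
    (hD : ∀ y ∈ interior s, wronskian (deriv ψ) (deriv φ) y ≤ 0) :
    AntitoneOn (outerCoeff φ ψ) s := by
  refine antitoneOn_of_deriv_nonpos hs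
    (fun y hy => (hasDerivAt_outerCoeff hφ hψ (hW y hy)).continuousAt.continuousWithinAt)
    (fun y hy => (hasDerivAt_outerCoeff hφ hψ (hW y (interior_subset hy))).differentiableAt
      |>.differentiableWithinAt) fun y hy => ?_
  rw [(hasDerivAt_outerCoeff hφ hψ (hW y (interior_subset hy))).deriv]
  exact div_nonpos_of_nonpos_of_nonneg (mul_nonpos_of_nonneg_of_nonpos (hψs y hy) (hD y hy))
    (sq_nonneg _)

theorem wronskian_deriv_eq_of_ode {α β r A : ℝ}
    (hψ : α * deriv (deriv ψ) x + β * deriv ψ x - r * ψ x = 0)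
    (hφ : α * deriv (deriv φ) x + (β - A) * deriv φ x - r * φ x = 0) :
    α * wronskian (deriv ψ) (deriv φ) x = r * wronskian φ ψ x + A * (deriv ψ x * deriv φ x) := by
  unfold wronskian
  linear_combination deriv ψ x * hφ - deriv φ x * hψ

theorem wronskian_deriv_nonpos_of_ode {α β r A : ℝ} (hα : 0 < α) (hr : 0 < r)
    (hψ : α * deriv (deriv ψ) x + β * deriv ψ x - r * ψ x = 0)
    (hφ : α * deriv (deriv φ) x + (β - A) * deriv φ x - r * φ x = 0)
    (hφ' : deriv φ x < 0) (hψ' : 0 < deriv ψ x)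
    (hf : ψ x / deriv ψ x - φ x / deriv φ x ≤ A / r) :
    wronskian (deriv ψ) (deriv φ) x ≤ 0 := by
  have hprod : deriv ψ x * deriv φ x < 0 := mul_neg_of_pos_of_neg hψ' hφ'
  rw [div_sub_div _ _ hψ'.ne' hφ'.ne, div_le_iff_of_neg hprod, div_mul_eq_mul_div,
    div_le_iff₀ hr] at hf
  refine nonpos_of_mul_nonpos_right ?_ hα
  rw [wronskian_deriv_eq_of_ode hψ hφ, wronskian]
  linarith

end Wronskian

noncomputable def thresholdValue (φ ψ : ℝ → ℝ) (b x : ℝ) : ℝ :=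
  if x ≤ b then ψ x * innerCoeff φ ψ b else 1 - φ x * outerCoeff φ ψ b

section ThresholdValue

variable {φ ψ : ℝ → ℝ}

theorem thresholdValue_le_of_le (hφ : ContDiff ℝ 2 φ) (hψ : ContDiff ℝ 2 ψ) {b b' x : ℝ}
    (hb : b ≤ b') (hb0 : 0 ≤ b) (hx : 0 ≤ x) (hφnn : ∀ y ≥ (0:ℝ), 0 ≤ φ y)
    (hψnn : ∀ y ≥ (0:ℝ), 0 ≤ ψ y) (hW : ∀ y ≥ (0:ℝ), wronskian φ ψ y ≠ 0)
    (hD : ∀ y ∈ Ioo 0 b', wronskian (deriv ψ) (deriv φ) y ≤ 0) :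
    thresholdValue φ ψ b x ≤ thresholdValue φ ψ b' x := by
  have hWs : ∀ y ∈ Icc 0 b', wronskian φ ψ y ≠ 0 := fun y hy => hW y hy.1
  rw [← interior_Icc] at hD
  have hinner := monotoneOn_innerCoeff hφ hψ (convex_Icc 0 b') hWs
    (fun y hy => hφnn y (interior_subset hy).1) hD
  have houter := antitoneOn_outerCoeff hφ hψ (convex_Icc 0 b') hWs
    (fun y hy => hψnn y (interior_subset hy).1) hD
  have hbmem : b ∈ Icc 0 b' := ⟨hb0, hb⟩
  have hb'mem : b' ∈ Icc 0 b' := ⟨hb0.trans hb, le_rfl⟩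
  unfold thresholdValue
  split_ifs with hxb hxb' hxb'
  · exact mul_le_mul_of_nonneg_left (hinner hbmem hb'mem hb) (hψnn x hx)
  · exact absurd (hxb.trans hb) hxb'
  · have hxmem : x ∈ Icc 0 b' := ⟨hx, hxb'⟩
    calc 1 - φ x * outerCoeff φ ψ b
        ≤ 1 - φ x * outerCoeff φ ψ x :=
          sub_le_sub_left (mul_le_mul_of_nonneg_left
            (houter hbmem hxmem (not_le.1 hxb).le) (hφnn x hx)) 1
      _ = ψ x * innerCoeff φ ψ x := by
          rw [← mul_innerCoeff_add_mul_outerCoeff (hW x hx)]; ring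
      _ ≤ ψ x * innerCoeff φ ψ b' :=
          mul_le_mul_of_nonneg_left (hinner hxmem hb'mem hxb') (hψnn x hx)
  · exact sub_le_sub_left (mul_le_mul_of_nonneg_left (houter hbmem hb'mem hb) (hφnn x hx)) 1

theorem mul_eq_thresholdValue {K r n b x v : ℝ} (hr : r ≠ 0) (hn : n ≠ 0)
    (hlo : x ≤ b → v = -(K / (n * r)) * deriv φ b / wronskian φ ψ b * ψ x)
    (hhi : b ≤ x → v = -(K / (n * r)) * deriv ψ b / wronskian φ ψ b * φ x + K / (n * r)) :
    n * v = K / r * thresholdValue φ ψ b x := by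
  unfold thresholdValue innerCoeff outerCoeff
  split_ifs with hxb
  · rw [hlo hxb]
    field_simp
  · rw [hhi (le_of_not_ge hxb)]
    field_simp
    ring

end ThresholdValue

def IsThreshold (g : ℝ → ℝ) (k b : ℝ) : Prop :=
  (g 0 < k → 0 < b ∧ g b = k ∧ ∀ z, 0 < z → g z = k → z = b) ∧ (¬ g 0 < k → b = 0)

namespace IsThreshold

variable {g : ℝ → ℝ} {k b : ℝ}

theorem nonneg (h : IsThreshold g k b) : 0 ≤ b := by
  by_cases h0 : g 0 < k
  · exact (h.1 h0).1.le
  · exact (h.2 h0).ge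

theorem lt_of_mem_Ioo (h : IsThreshold g k b) (hg : ContinuousOn g (Ici 0)) {y : ℝ}
    (hy : y ∈ Ioo 0 b) : g y < k := by
  have h0 : g 0 < k := by
    by_contra h0
    exact (hy.1.trans hy.2).ne' (h.2 h0)
  obtain ⟨-, -, huniq⟩ := h.1 h0
  exact (hg.mono Icc_subset_Ici_self).lt_of_forall_ne h0
    (fun z hz hgz => hz.2.ne (huniq z hz.1 hgz)) y ⟨hy.1.le, hy.2⟩

theorem mono {k' b' : ℝ} (h : IsThreshold g k b) (h' : IsThreshold g k' b')
    (hg : ContinuousOn g (Ici 0)) (hk : k' ≤ k) : b' ≤ b := by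
  by_contra! hbb'
  have h0 : g 0 < k' := by
    by_contra h0
    exact (h.nonneg.trans_lt hbb').ne' (h'.2 h0)
  obtain ⟨hb, hgb, -⟩ := h.1 (h0.trans_le hk)
  linarith [h'.lt_of_mem_Ioo hg ⟨hb, hbb'⟩]

end IsThreshold

theorem stmt_4_general
    (r : ℝ) (hr : 0 < r)
    (μ σ : ℝ → ℝ)
    (hσpos : ∀ x ≥ (0:ℝ), 0 < σ x ^ 2)
    (ψ : ℝ → ℝ) (hψC : ContDiff ℝ 3 ψ)
    (hψ0 : ψ 0 = 0) (hψd0 : deriv ψ 0 = 1)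
    (hψpos : ∀ x > (0:ℝ), 0 < ψ x)
    (hψmono : MonotoneOn ψ (Ici (0:ℝ)))
    (hψODE : ∀ x ≥ (0:ℝ),
      (1/2) * σ x ^ 2 * deriv (deriv ψ) x + μ x * deriv ψ x - r * ψ x = 0)
    (φ : ℝ → ℝ → ℝ)
    (hφC : ∀ A ≥ (0:ℝ), ContDiff ℝ 2 (φ A))
    (hφ0 : ∀ A ≥ (0:ℝ), φ A 0 = 1)
    (hφpos : ∀ A ≥ (0:ℝ), ∀ x ≥ (0:ℝ), 0 < φ A x)
    (hφanti : ∀ A ≥ (0:ℝ), AntitoneOn (φ A) (Ici (0:ℝ)))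
    (hφODE : ∀ A ≥ (0:ℝ), ∀ x ≥ (0:ℝ),
      (1/2) * σ x ^ 2 * deriv (deriv (φ A)) x + (μ x - A) * deriv (φ A) x - r * φ A x = 0)
    (Kbar : ℝ) (hKbar : 0 < Kbar)
    (f : ℝ → ℝ)
    (hf : ∀ b, f b = ψ b / deriv ψ b - φ Kbar b / deriv (φ Kbar) b)
    (bhat : ℕ → ℝ)
    (hbhat : ∀ n : ℕ, 1 ≤ n →
      (deriv (φ Kbar) 0 < -((n : ℝ) * r / Kbar) →
        0 < bhat n ∧ f (bhat n) = Kbar / ((n : ℝ) * r) ∧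
        (∀ b' : ℝ, 0 < b' → f b' = Kbar / ((n : ℝ) * r) → b' = bhat n)) ∧
      (¬ deriv (φ Kbar) 0 < -((n : ℝ) * r / Kbar) → bhat n = 0))
    (V : ℕ → ℝ → ℝ)
    (hVlo : ∀ n : ℕ, 1 ≤ n → ∀ x, 0 ≤ x → x ≤ bhat n →
      V n x = ((-(Kbar / ((n : ℝ) * r)) * deriv (φ Kbar) (bhat n)) /
        (φ Kbar (bhat n) * deriv ψ (bhat n)
          - deriv (φ Kbar) (bhat n) * ψ (bhat n))) * ψ x)
    (hVhi : ∀ n : ℕ, 1 ≤ n → ∀ x, bhat n ≤ x →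
      V n x = ((-(Kbar / ((n : ℝ) * r)) * deriv ψ (bhat n)) /
        (φ Kbar (bhat n) * deriv ψ (bhat n)
          - deriv (φ Kbar) (bhat n) * ψ (bhat n))) * φ Kbar x + Kbar / ((n : ℝ) * r)) :
    ∀ m n : ℕ, 1 ≤ m → m ≤ n → ∀ x ≥ (0:ℝ), (n : ℝ) * V n x ≤ (m : ℝ) * V m x := by
  intro m n hm hmn x hx
  have hn : 1 ≤ n := hm.trans hmn
  set Φ := φ Kbar
  have hK : 0 ≤ Kbar := hKbar.le
  have hΦC : ContDiff ℝ 2 Φ := hφC Kbar hK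
  have hψC2 : ContDiff ℝ 2 ψ := hψC.of_le (by norm_num)
  have hψ' : ∀ y ≥ (0:ℝ), 0 < deriv ψ y := by
    intro y hy
    rcases hy.lt_or_eq with hy | rfl
    · exact deriv_pos_of_monotoneOn_of_ode hr hψmono (hψC2.differentiable two_ne_zero) hy
        (hψpos y hy) (hψODE y hy.le)
    · exact hψd0 ▸ one_pos
  have hΦ' : ∀ y ≥ (0:ℝ), deriv Φ y < 0 := fun y hy =>
    deriv_neg_of_antitoneOn_of_ode hr (by linarith [hσpos y hy]) (hφanti Kbar hK)
      (hΦC.differentiable two_ne_zero) (hΦC.differentiable_deriv_two y) hy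
      (hφpos Kbar hK y hy) (hφODE Kbar hK y hy)
  have hψnn : ∀ y ≥ (0:ℝ), 0 ≤ ψ y := fun y hy => hψ0 ▸ hψmono self_mem_Ici hy hy
  have hW : ∀ y ≥ (0:ℝ), wronskian Φ ψ y ≠ 0 := fun y hy =>
    (wronskian_pos (hφpos Kbar hK y hy) (hψnn y hy) (hΦ' y hy) (hψ' y hy)).ne'
  have hfcont : ContinuousOn f (Ici 0) :=
    (((hψC.of_le (by norm_num)).continuousOn_div_deriv fun y hy => (hψ' y hy).ne').sub
      ((hΦC.of_le one_le_two).continuousOn_div_deriv fun y hy => (hΦ' y hy).ne)).congr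
      fun y _ => hf y
  have hthr : ∀ j : ℕ, 1 ≤ j → IsThreshold f (Kbar / (j * r)) (bhat j) := by
    intro j hj
    have hjr : (0:ℝ) < j * r := mul_pos (by exact_mod_cast hj) hr
    have hC : deriv Φ 0 < -(j * r / Kbar) ↔ f 0 < Kbar / (j * r) := by
      rw [hf, hψ0, hψd0, show Φ 0 = 1 from hφ0 Kbar hK, zero_div, zero_sub, ← neg_div, ← div_neg]
      rw [one_div_lt (neg_pos.2 (hΦ' 0 le_rfl)) (by positivity), one_div_div, lt_neg, neg_div]
    simpa only [IsThreshold, hC] using hbhat j hj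
  have hD : ∀ y ∈ Ioo 0 (bhat m), wronskian (deriv ψ) (deriv Φ) y ≤ 0 := by
    intro y hy
    have hy0 : (0:ℝ) ≤ y := hy.1.le
    refine wronskian_deriv_nonpos_of_ode (by linarith [hσpos y hy0]) hr (hψODE y hy0)
      (hφODE Kbar hK y hy0) (hΦ' y hy0) (hψ' y hy0) ?_
    calc _ = f y := (hf y).symm
      _ ≤ Kbar / (m * r) := ((hthr m hm).lt_of_mem_Ioo hfcont hy).le
      _ ≤ Kbar / r := div_le_div_of_nonneg_left hK hr
          (le_mul_of_one_le_left hr.le (by exact_mod_cast hm))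
  have hb : bhat n ≤ bhat m := (hthr m hm).mono (hthr n hn) hfcont
    (div_le_div_of_nonneg_left hK (mul_pos (by exact_mod_cast hm) hr)
      (mul_le_mul_of_nonneg_right (by exact_mod_cast hmn) hr.le))
  rw [mul_eq_thresholdValue hr.ne' (by positivity) (hVlo n hn x hx) (hVhi n hn x),
    mul_eq_thresholdValue hr.ne' (by positivity) (hVlo m hm x hx) (hVhi m hm x)]
  exact mul_le_mul_of_nonneg_left (thresholdValue_le_of_le hΦC hψC2 hb (hthr n hn).nonneg hx
    (fun y hy => (hφpos Kbar hK y hy).le) hψnn hW hD) (by positivity)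

/-- with fixed total maximal extraction rate K̄ (individual rate K̄/n),
the total equilibrium value n·V_n(x) is nonincreasing in the number n of agents:
for 1 ≤ m ≤ n and x ≥ 0 one has m·V_m(x) ≥ n·V_n(x). -/
theorem stmt_4
    (r c : ℝ) (hr : 0 < r) (hc : 0 < c)
    (μ σ : ℝ → ℝ) (hμ : ContDiff ℝ 1 μ) (hσ : ContDiff ℝ 1 σ)
    (hσpos : ∀ x ≥ (0:ℝ), 0 < σ x ^ 2)
    (hμderiv : ∀ x ≥ (0:ℝ), deriv μ x < r)
    (hμ0 : 0 < μ 0)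
    (hμc : ∀ x ≥ c, μ x ≤ r * x - 1 / c)
    (ψ : ℝ → ℝ) (hψC : ContDiff ℝ 3 ψ)
    (hψ0 : ψ 0 = 0) (hψd0 : deriv ψ 0 = 1)
    (hψpos : ∀ x > (0:ℝ), 0 < ψ x)
    (hψmono : MonotoneOn ψ (Ici (0:ℝ)))
    (hψODE : ∀ x ≥ (0:ℝ),
      (1/2) * σ x ^ 2 * deriv (deriv ψ) x + μ x * deriv ψ x - r * ψ x = 0)
    (φ : ℝ → ℝ → ℝ)
    (hφC : ∀ A ≥ (0:ℝ), ContDiff ℝ 2 (φ A))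
    (hφ0 : ∀ A ≥ (0:ℝ), φ A 0 = 1)
    (hφpos : ∀ A ≥ (0:ℝ), ∀ x ≥ (0:ℝ), 0 < φ A x)
    (hφanti : ∀ A ≥ (0:ℝ), AntitoneOn (φ A) (Ici (0:ℝ)))
    (hφlim : ∀ A ≥ (0:ℝ), Tendsto (φ A) atTop (nhds 0))
    (hφODE : ∀ A ≥ (0:ℝ), ∀ x ≥ (0:ℝ),
      (1/2) * σ x ^ 2 * deriv (deriv (φ A)) x + (μ x - A) * deriv (φ A) x - r * φ A x = 0)
    (Kbar : ℝ) (hKbar : 0 < Kbar)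
    (f : ℝ → ℝ)
    (hf : ∀ b, f b = ψ b / deriv ψ b - φ Kbar b / deriv (φ Kbar) b)
    (bhat : ℕ → ℝ)
    (hbhatnn : ∀ n : ℕ, 1 ≤ n → 0 ≤ bhat n)
    (hbhat : ∀ n : ℕ, 1 ≤ n →
      (deriv (φ Kbar) 0 < -((n : ℝ) * r / Kbar) →
        0 < bhat n ∧ f (bhat n) = Kbar / ((n : ℝ) * r) ∧
        (∀ b' : ℝ, 0 < b' → f b' = Kbar / ((n : ℝ) * r) → b' = bhat n)) ∧
      (¬ deriv (φ Kbar) 0 < -((n : ℝ) * r / Kbar) → bhat n = 0))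
    (V : ℕ → ℝ → ℝ)
    (hVlo : ∀ n : ℕ, 1 ≤ n → ∀ x, 0 ≤ x → x ≤ bhat n →
      V n x = ((-(Kbar / ((n : ℝ) * r)) * deriv (φ Kbar) (bhat n)) /
        (φ Kbar (bhat n) * deriv ψ (bhat n)
          - deriv (φ Kbar) (bhat n) * ψ (bhat n))) * ψ x)
    (hVhi : ∀ n : ℕ, 1 ≤ n → ∀ x, bhat n ≤ x →
      V n x = ((-(Kbar / ((n : ℝ) * r)) * deriv ψ (bhat n)) /
        (φ Kbar (bhat n) * deriv ψ (bhat n)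
          - deriv (φ Kbar) (bhat n) * ψ (bhat n))) * φ Kbar x + Kbar / ((n : ℝ) * r)) :
    ∀ m n : ℕ, 1 ≤ m → m ≤ n → ∀ x ≥ (0:ℝ), (n : ℝ) * V n x ≤ (m : ℝ) * V m x :=
  stmt_4_general r hr μ σ hσpos ψ hψC hψ0 hψd0 hψpos hψmono hψODE φ hφC hφ0 hφpos hφanti hφODE Kbar
    hKbar f hf bhat hbhat V hVlo hVhi
end

section
/- Let n ≥ 1 be an integer and K > 0, and suppose φ_{nK}'(0) < −r/K. Define f(b) := ψ(b)/ψ'(b) − φ_{nK}(b)/φ_{nK}'(b) for b ≥ 0. Then the equation f(b) = K/r has a unique positive solution b̂; moreover 0 < b̂ ≤ b*, where b* is the unique inflection point of ψ. -/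
/-!
On `[0, ∞)` we have `ψ' > 0` and `φ' < 0` (writing `φ = φ_{nK}`, `A = nK`): at a critical point the
monotone function's derivative would be extremal, so the second derivative vanishes and the
equation forces `r ψ = 0`, resp. `r φ = 0`. Moreover `φ'' > 0`: the quantity
`R = r φ - (μ - A) φ' = ½σ²φ''` has derivative `(r - μ') φ' < 0` wherever it vanishes, so once
nonpositive it would stay nonpositive, and the decreasing concave tail of `φ` would become negative.

Now `f' = φ φ''/φ'² - ψ ψ''/ψ'² > 0` on `(0, b*)`, where `ψ` is concave, and `f(0) = -1/φ'(0) < K/r`.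
Where `ψ'' ≥ 0` the two equations give `ψ/ψ' ≥ μ/r` and `-φ/φ' > (A - μ)/r`, so `f > A/r ≥ K/r` on
`[b*, ∞)`. The intermediate value theorem and strict monotonicity on `[0, b*]` finish the proof.
-/

open Set Filter Topology

section DerivSign

variable {g : ℝ → ℝ} {s : Set ℝ} {x : ℝ}

theorem MonotoneOn.deriv_nonneg_of_mem_nhds (hg : MonotoneOn g s) (hs : s ∈ 𝓝 x) :
    0 ≤ deriv g x := by
  rw [← derivWithin_of_mem_nhds hs]
  exact hg.derivWithin_nonneg

theorem AntitoneOn.deriv_nonpos_of_mem_nhds (hg : AntitoneOn g s) (hs : s ∈ 𝓝 x) :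
    deriv g x ≤ 0 := by
  rw [← derivWithin_of_mem_nhds hs]
  exact hg.derivWithin_nonpos

theorem MonotoneOn.isLocalMin_deriv (hg : MonotoneOn g s) (hs : s ∈ 𝓝 x)
    (h : deriv g x = 0) : IsLocalMin (deriv g) x := by
  filter_upwards [interior_mem_nhds.2 hs] with y hy
  rw [h]
  exact hg.deriv_nonneg_of_mem_nhds (mem_interior_iff_mem_nhds.1 hy)

theorem AntitoneOn.isLocalMax_deriv (hg : AntitoneOn g s) (hs : s ∈ 𝓝 x)
    (h : deriv g x = 0) : IsLocalMax (deriv g) x := by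
  filter_upwards [interior_mem_nhds.2 hs] with y hy
  rw [h]
  exact hg.deriv_nonpos_of_mem_nhds (mem_interior_iff_mem_nhds.1 hy)

variable {σ m : ℝ → ℝ} {r : ℝ}

theorem MonotoneOn.deriv_pos_of_ode (hg : MonotoneOn g (Ici 0)) (hr : r ≠ 0)
    (hg0 : 0 < deriv g 0) (hgne : ∀ x > 0, g x ≠ 0)
    (hode : ∀ x ≥ 0, (1/2) * σ x ^ 2 * deriv (deriv g) x + m x * deriv g x - r * g x = 0) :
    ∀ x ≥ 0, 0 < deriv g x := by
  intro x hx
  rcases hx.eq_or_lt with rfl | hx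
  · exact hg0
  refine (hg.deriv_nonneg_of_mem_nhds (Ici_mem_nhds hx)).lt_of_ne fun h => ?_
  have hodex := hode x hx.le
  rw [(hg.isLocalMin_deriv (Ici_mem_nhds hx) h.symm).deriv_eq_zero, ← h] at hodex
  simp [hr, hgne x hx] at hodex

theorem AntitoneOn.deriv_neg_of_ode (hg : AntitoneOn g (Ici 0)) (hr : r ≠ 0)
    (hg0 : deriv g 0 < 0) (hgne : ∀ x > 0, g x ≠ 0)
    (hode : ∀ x ≥ 0, (1/2) * σ x ^ 2 * deriv (deriv g) x + m x * deriv g x - r * g x = 0) :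
    ∀ x ≥ 0, deriv g x < 0 := by
  intro x hx
  rcases hx.eq_or_lt with rfl | hx
  · exact hg0
  refine (hg.deriv_nonpos_of_mem_nhds (Ici_mem_nhds hx)).lt_of_ne fun h => ?_
  have hodex := hode x hx.le
  rw [(hg.isLocalMax_deriv (Ici_mem_nhds hx) h).deriv_eq_zero, h] at hodex
  simp [hr, hgne x hx] at hodex

end DerivSign

theorem exists_neg_of_deriv_deriv_nonpos {g : ℝ → ℝ} {a : ℝ} (hg : ContDiff ℝ 2 g)
    (hg'' : ∀ x ≥ a, deriv (deriv g) x ≤ 0) (hga : deriv g a < 0) : ∃ x ≥ a, g x < 0 := by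
  have hconc : ConcaveOn ℝ (Ici a) g :=
    concaveOn_of_deriv2_nonpos (convex_Ici a) hg.continuous.continuousOn
      (hg.differentiable two_ne_zero).differentiableOn
      ((hg.deriv' (n := 1)).differentiable one_ne_zero).differentiableOn
      fun x hx => hg'' x (interior_subset hx)
  set y := a + (|g a| + 1) / -deriv g a
  have hay : a < y := lt_add_of_pos_right a (div_pos (by positivity) (neg_pos.2 hga))
  have hslope := hconc.slope_le_deriv self_mem_Ici hay.le hay
    (hg.differentiable two_ne_zero a)
  rw [slope_def_field, div_le_iff₀ (sub_pos.2 hay)] at hslope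
  refine ⟨y, hay.le, ?_⟩
  have : deriv g a * (y - a) = -(|g a| + 1) := by
    simp only [y, add_sub_cancel_left]
    field_simp [hga.ne]
  linarith [le_abs_self (g a)]

theorem deriv_deriv_pos_of_ode {σ m g : ℝ → ℝ} {r : ℝ} (hg : ContDiff ℝ 2 g)
    (hm : Differentiable ℝ m) (hm' : ∀ x ≥ 0, deriv m x < r) (hσ : ∀ x ≥ 0, 0 < σ x ^ 2)
    (hpos : ∀ x ≥ 0, 0 < g x) (hg' : ∀ x ≥ 0, deriv g x < 0)
    (hode : ∀ x ≥ 0, (1/2) * σ x ^ 2 * deriv (deriv g) x + m x * deriv g x - r * g x = 0) :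
    ∀ x ≥ 0, 0 < deriv (deriv g) x := by
  have dg' : Differentiable ℝ (deriv g) := (hg.deriv' (n := 1)).differentiable one_ne_zero
  set R : ℝ → ℝ := fun x => r * g x - m x * deriv g x
  have hR : ∀ x, HasDerivAt R
      (r * deriv g x - (deriv m x * deriv g x + m x * deriv (deriv g) x)) x := fun x =>
    ((hg.differentiable two_ne_zero x).hasDerivAt.const_mul r).sub
      ((hm x).hasDerivAt.mul (dg' x).hasDerivAt)
  have hRode : ∀ x ≥ 0, (1/2) * σ x ^ 2 * deriv (deriv g) x = R x := fun x hx => by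
    linear_combination hode x hx
  intro x₀ hx₀
  by_contra! hx₀neg
  have hRnonpos : ∀ y ≥ x₀, R y ≤ 0 := by
    intro y hy
    refine image_le_of_deriv_right_lt_deriv_boundary (B := 0) (B' := 0)
      (fun x _ => (hR x).continuousAt.continuousWithinAt) (fun x _ => (hR x).hasDerivWithinAt)
      ?_ (fun _ => hasDerivAt_const _ _) ?_ ⟨hy, le_rfl⟩
    · rw [← hRode x₀ hx₀]
      exact mul_nonpos_of_nonneg_of_nonpos (by linarith [hσ x₀ hx₀]) hx₀neg
    · intro x hx hRx
      rw [Pi.zero_apply] at hRx ⊢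
      have hx0 : 0 ≤ x := hx₀.trans hx.1
      have hg''x : deriv (deriv g) x = 0 := by
        have := hRode x hx0
        rw [hRx] at this
        simpa [(hσ x hx0).ne'] using this
      rw [hg''x, mul_zero, add_zero, ← sub_mul]
      exact mul_neg_of_pos_of_neg (sub_pos.2 (hm' x hx0)) (hg' x hx0)
  have hconc : ∀ y ≥ x₀, deriv (deriv g) y ≤ 0 := fun y hy => by
    have hy0 : 0 ≤ y := hx₀.trans hy
    have := hRode y hy0 ▸ hRnonpos y hy
    exact nonpos_of_mul_nonpos_right this (by linarith [hσ y hy0])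
  obtain ⟨y, hy, hgy⟩ := exists_neg_of_deriv_deriv_nonpos hg hconc (hg' x₀ hx₀)
  exact (hpos y (hx₀.trans hy)).not_gt hgy

theorem hasDerivAt_div_deriv {g : ℝ → ℝ} {x : ℝ} (hg : DifferentiableAt ℝ g x)
    (hg' : DifferentiableAt ℝ (deriv g) x) (hx : deriv g x ≠ 0) :
    HasDerivAt (fun y => g y / deriv g y) (1 - g x * deriv (deriv g) x / deriv g x ^ 2) x := by
  refine (hg.hasDerivAt.div hg'.hasDerivAt hx).congr_deriv ?_
  rw [sub_div, ← sq, div_self (pow_ne_zero 2 hx)]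

theorem continuousOn_div_deriv_sub_div_deriv {ψ Φ : ℝ → ℝ} {s : Set ℝ} (hψ : ContDiff ℝ 2 ψ)
    (hΦ : ContDiff ℝ 2 Φ) (hψ' : ∀ x ∈ s, deriv ψ x ≠ 0) (hΦ' : ∀ x ∈ s, deriv Φ x ≠ 0) :
    ContinuousOn (fun x => ψ x / deriv ψ x - Φ x / deriv Φ x) s :=
  (hψ.continuous.continuousOn.div (hψ.continuous_deriv one_le_two).continuousOn hψ').sub
    (hΦ.continuous.continuousOn.div (hΦ.continuous_deriv one_le_two).continuousOn hΦ')

theorem strictMonoOn_div_deriv_sub_div_deriv {ψ Φ : ℝ → ℝ} {a b : ℝ} (hψ : ContDiff ℝ 2 ψ)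
    (hΦ : ContDiff ℝ 2 Φ) (hψ' : ∀ x ∈ Icc a b, deriv ψ x ≠ 0)
    (hΦ' : ∀ x ∈ Icc a b, deriv Φ x ≠ 0)
    (hψ'' : ∀ x ∈ Ioo a b, ψ x * deriv (deriv ψ) x ≤ 0)
    (hΦ'' : ∀ x ∈ Ioo a b, 0 < Φ x * deriv (deriv Φ) x) :
    StrictMonoOn (fun x => ψ x / deriv ψ x - Φ x / deriv Φ x) (Icc a b) := by
  have hderiv : ∀ x ∈ Ioo a b, HasDerivAt (fun x => ψ x / deriv ψ x - Φ x / deriv Φ x)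
      ((1 - ψ x * deriv (deriv ψ) x / deriv ψ x ^ 2)
        - (1 - Φ x * deriv (deriv Φ) x / deriv Φ x ^ 2)) x := fun x hx =>
    (hasDerivAt_div_deriv (hψ.differentiable two_ne_zero x)
      ((hψ.deriv' (n := 1)).differentiable one_ne_zero x) (hψ' x (Ioo_subset_Icc_self hx))).sub
    (hasDerivAt_div_deriv (hΦ.differentiable two_ne_zero x)
      ((hΦ.deriv' (n := 1)).differentiable one_ne_zero x) (hΦ' x (Ioo_subset_Icc_self hx)))
  refine strictMonoOn_of_deriv_pos (convex_Icc a b)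
    (continuousOn_div_deriv_sub_div_deriv hψ hΦ hψ' hΦ') fun x hx => ?_
  rw [interior_Icc] at hx
  rw [(hderiv x hx).deriv, sub_sub_sub_cancel_left, sub_pos]
  exact (div_nonpos_of_nonpos_of_nonneg (hψ'' x hx) (sq_nonneg _)).trans_lt
    (div_pos (hΦ'' x hx) (sq_pos_of_ne_zero (hΦ' x (Ioo_subset_Icc_self hx))))

theorem div_lt_div_sub_div_of_ode {a m r A p p' p'' q q' q'' : ℝ} (hr : 0 < r) (ha : 0 < a)
    (hp' : 0 < p') (hq' : q' < 0) (hp'' : 0 ≤ p'') (hq'' : 0 < q'')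
    (hp : a * p'' + m * p' - r * p = 0) (hq : a * q'' + (m - A) * q' - r * q = 0) :
    A / r < p / p' - q / q' := by
  have hp_bound : m / r ≤ p / p' := by
    rw [div_le_div_iff₀ hr hp']
    nlinarith [mul_nonneg ha.le hp'']
  have hq_bound : (A - m) / r < -(q / q') := by
    rw [← div_neg, div_lt_div_iff₀ hr (neg_pos.2 hq')]
    nlinarith [mul_pos ha hq'']
  calc A / r = m / r + (A - m) / r := by ring
    _ < p / p' - q / q' := by linarith

theorem exists_unique_eq_of_strictMonoOn {f : ℝ → ℝ} {a b c : ℝ} (hab : a ≤ b)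
    (hcont : ContinuousOn f (Icc a b)) (hmono : StrictMonoOn f (Icc a b)) (ha : f a < c)
    (hb : ∀ x ≥ b, c < f x) :
    ∃ x, a < x ∧ x ≤ b ∧ f x = c ∧ ∀ y, a < y → f y = c → y = x := by
  obtain ⟨x, ⟨hax, hxb⟩, hfx⟩ := intermediate_value_Ioo hab hcont ⟨ha, hb b le_rfl⟩
  refine ⟨x, hax, hxb.le, hfx, fun y hay hfy => ?_⟩
  rcases le_or_gt y b with hyb | hyb
  · exact hmono.injOn ⟨hay.le, hyb⟩ ⟨hax.le, hxb.le⟩ (hfy.trans hfx.symm)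
  · exact absurd hfy (hb y hyb.le).ne'

theorem stmt_10_general
    (r : ℝ) (hr : 0 < r)
    (μ σ : ℝ → ℝ) (hμ : ContDiff ℝ 1 μ)
    (hσpos : ∀ x ≥ (0:ℝ), 0 < σ x ^ 2)
    (hμderiv : ∀ x ≥ (0:ℝ), deriv μ x < r)
    (ψ : ℝ → ℝ) (hψC : ContDiff ℝ 3 ψ)
    (hψ0 : ψ 0 = 0) (hψd0 : deriv ψ 0 = 1)
    (hψpos : ∀ x > (0:ℝ), 0 < ψ x)
    (hψmono : MonotoneOn ψ (Ici (0:ℝ)))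
    (hψODE : ∀ x ≥ (0:ℝ),
      (1/2) * σ x ^ 2 * deriv (deriv ψ) x + μ x * deriv ψ x - r * ψ x = 0)
    (bstar : ℝ) (hbstar : 0 < bstar)
    (hconc : ∀ x, 0 ≤ x → x < bstar → deriv (deriv ψ) x < 0)
    (hconv : ∀ x, bstar < x → 0 < deriv (deriv ψ) x)
    (φ : ℝ → ℝ → ℝ)
    (hφC : ∀ A ≥ (0:ℝ), ContDiff ℝ 2 (φ A))
    (hφ0 : ∀ A ≥ (0:ℝ), φ A 0 = 1)
    (hφpos : ∀ A ≥ (0:ℝ), ∀ x ≥ (0:ℝ), 0 < φ A x)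
    (hφanti : ∀ A ≥ (0:ℝ), AntitoneOn (φ A) (Ici (0:ℝ)))
    (hφODE : ∀ A ≥ (0:ℝ), ∀ x ≥ (0:ℝ),
      (1/2) * σ x ^ 2 * deriv (deriv (φ A)) x + (μ x - A) * deriv (φ A) x - r * φ A x = 0)
    (n : ℕ) (hn : 1 ≤ n) (K : ℝ) (hK : 0 < K)
    (hcond : deriv (φ ((n : ℝ) * K)) 0 < -(r / K))
    (f : ℝ → ℝ)
    (hf : ∀ b, f b = ψ b / deriv ψ b
      - φ ((n : ℝ) * K) b / deriv (φ ((n : ℝ) * K)) b) :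
    ∃ bh : ℝ, 0 < bh ∧ bh ≤ bstar ∧ f bh = K / r ∧
      ∀ b' : ℝ, 0 < b' → f b' = K / r → b' = bh := by
  obtain rfl : f = _ := funext hf
  set A : ℝ := (n : ℝ) * K
  have hA : 0 ≤ A := by positivity
  have hKA : K / r ≤ A / r := by
    gcongr
    exact le_mul_of_one_le_left hK.le (by exact_mod_cast hn)
  have hψ2 : ContDiff ℝ 2 ψ := hψC.of_le (by norm_num)
  have hψ' : ∀ x ≥ 0, 0 < deriv ψ x :=
    hψmono.deriv_pos_of_ode hr.ne' (hψd0 ▸ one_pos) (fun x hx => (hψpos x hx).ne') hψODE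
  have hΦ' : ∀ x ≥ 0, deriv (φ A) x < 0 :=
    (hφanti A hA).deriv_neg_of_ode hr.ne' (hcond.trans (neg_neg_of_pos (div_pos hr hK)))
      (fun x hx => (hφpos A hA x hx.le).ne') (hφODE A hA)
  have hΦ'' : ∀ x ≥ 0, 0 < deriv (deriv (φ A)) x :=
    deriv_deriv_pos_of_ode (hφC A hA) ((hμ.differentiable one_ne_zero).sub_const A)
      (by simpa using hμderiv) hσpos (hφpos A hA) hΦ' (hφODE A hA)
  have hψ''_nonneg : Ici bstar ⊆ {x | 0 ≤ deriv (deriv ψ) x} := by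
    rw [← closure_Ioi]
    exact (isClosed_le continuous_const ((hψC.deriv' (n := 2)).continuous_deriv one_le_two))
      |>.closure_subset_iff.2 fun x hx => (hconv x hx).le
  have hf0 : ψ 0 / deriv ψ 0 - φ A 0 / deriv (φ A) 0 < K / r :=
    calc ψ 0 / deriv ψ 0 - φ A 0 / deriv (φ A) 0 = 1 / -deriv (φ A) 0 := by
          rw [hψ0, hψd0, hφ0 A hA]; ring
      _ < 1 / (r / K) := one_div_lt_one_div_of_lt (div_pos hr hK) (lt_neg_of_lt_neg hcond)
      _ = K / r := one_div_div r K
  refine exists_unique_eq_of_strictMonoOn hbstar.le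
    (continuousOn_div_deriv_sub_div_deriv hψ2 (hφC A hA) (fun x hx => (hψ' x hx.1).ne')
      (fun x hx => (hΦ' x hx.1).ne))
    (strictMonoOn_div_deriv_sub_div_deriv hψ2 (hφC A hA) (fun x hx => (hψ' x hx.1).ne')
      (fun x hx => (hΦ' x hx.1).ne)
      (fun x hx => mul_nonpos_of_nonneg_of_nonpos (hψpos x hx.1).le (hconc x hx.1.le hx.2).le)
      (fun x hx => mul_pos (hφpos A hA x hx.1.le) (hΦ'' x hx.1.le))) hf0 fun x hx => ?_
  have hx0 : 0 ≤ x := hbstar.le.trans hx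
  exact hKA.trans_lt <| div_lt_div_sub_div_of_ode hr (by linarith [hσpos x hx0]) (hψ' x hx0)
    (hΦ' x hx0) (hψ''_nonneg hx) (hΦ'' x hx0) (hψODE x hx0) (hφODE A hA x hx0)

/-- under φ_{nK}'(0) < −r/K, the equation
ψ(b)/ψ'(b) − φ_{nK}(b)/φ_{nK}'(b) = K/r has a unique positive solution b̂,
and 0 < b̂ ≤ b*, where b* is the unique inflection point of ψ. -/
theorem stmt_10
    (r c : ℝ) (hr : 0 < r) (hc : 0 < c)
    (μ σ : ℝ → ℝ) (hμ : ContDiff ℝ 1 μ) (hσ : ContDiff ℝ 1 σ)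
    (hσpos : ∀ x ≥ (0:ℝ), 0 < σ x ^ 2)
    (hμderiv : ∀ x ≥ (0:ℝ), deriv μ x < r)
    (hμ0 : 0 < μ 0)
    (hμc : ∀ x ≥ c, μ x ≤ r * x - 1 / c)
    (ψ : ℝ → ℝ) (hψC : ContDiff ℝ 3 ψ)
    (hψ0 : ψ 0 = 0) (hψd0 : deriv ψ 0 = 1)
    (hψpos : ∀ x > (0:ℝ), 0 < ψ x)
    (hψmono : MonotoneOn ψ (Ici (0:ℝ)))
    (hψODE : ∀ x ≥ (0:ℝ),
      (1/2) * σ x ^ 2 * deriv (deriv ψ) x + μ x * deriv ψ x - r * ψ x = 0)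
    (bstar : ℝ) (hbstar : 0 < bstar)
    (hconc : ∀ x, 0 ≤ x → x < bstar → deriv (deriv ψ) x < 0)
    (hconv : ∀ x, bstar < x → 0 < deriv (deriv ψ) x)
    (φ : ℝ → ℝ → ℝ)
    (hφC : ∀ A ≥ (0:ℝ), ContDiff ℝ 2 (φ A))
    (hφ0 : ∀ A ≥ (0:ℝ), φ A 0 = 1)
    (hφpos : ∀ A ≥ (0:ℝ), ∀ x ≥ (0:ℝ), 0 < φ A x)
    (hφanti : ∀ A ≥ (0:ℝ), AntitoneOn (φ A) (Ici (0:ℝ)))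
    (hφlim : ∀ A ≥ (0:ℝ), Tendsto (φ A) atTop (nhds 0))
    (hφODE : ∀ A ≥ (0:ℝ), ∀ x ≥ (0:ℝ),
      (1/2) * σ x ^ 2 * deriv (deriv (φ A)) x + (μ x - A) * deriv (φ A) x - r * φ A x = 0)
    (n : ℕ) (hn : 1 ≤ n) (K : ℝ) (hK : 0 < K)
    (hcond : deriv (φ ((n : ℝ) * K)) 0 < -(r / K))
    (f : ℝ → ℝ)
    (hf : ∀ b, f b = ψ b / deriv ψ b
      - φ ((n : ℝ) * K) b / deriv (φ ((n : ℝ) * K)) b) :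
    ∃ bh : ℝ, 0 < bh ∧ bh ≤ bstar ∧ f bh = K / r ∧
      ∀ b' : ℝ, 0 < b' → f b' = K / r → b' = bh :=
  stmt_10_general r hr μ σ hμ hσpos hμderiv ψ hψC hψ0 hψd0 hψpos hψmono hψODE bstar hbstar hconc
    hconv φ hφC hφ0 hφpos hφanti hφODE n hn K hK hcond f hf
end
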